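/- (Theorem 1, key step.) Let X be a real m×n matrix, Y a real m×l matrix with columns y₁,…,y_l, and λ₁, λ₂ ≥ 0. Let the row index set {1,…,n} be partitioned into k disjoint blocks B₁,…,B_k. Let W and W̃ be real n×l matrices with columns w_i, w̃_i, rows w^r, w̃^r, and column-block subvectors w_i^j, w̃_i^j (the subvector of column i indexed by block B_j). Assume the nondegeneracy conditions: X w_i ≠ y_i for all i, w^r ≠ 0 for all r, and w_i^j ≠ 0 for all i, j. If W̃ satisfies the surrogate inequality Σ_{i=1}^l ‖X w̃_i − y_i‖₂²/(2‖X w_i − y_i‖₂) + λ₁ Σ_{r=1}^n ‖w̃^r‖₂²/(2‖w^r‖₂) + λ₂ Σ_{i=1}^l Σ_{j=1}^k ‖w̃_i^j‖₂²/(2‖w_i^j‖₂) ≤ Σ_{i=1}^l ‖X w_i − y_i‖₂²/(2‖X w_i − y_i‖₂) + λ₁ Σ_{r=1}^n ‖w^r‖₂²/(2‖w^r‖₂) + λ₂ Σ_{i=1}^l Σ_{j=1}^k ‖w_i^j‖₂²/(2‖w_i^j‖₂), then the value of the objective function does not increase: Σ_{i=1}^l ‖X w̃_i − y_i‖₂ +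 λ₁ Σ_{r=1}^n ‖w̃^r‖₂ + λ₂ Σ_{i=1}^l Σ_{j=1}^k ‖w̃_i^j‖₂ ≤ Σ_{i=1}^l ‖X w_i − y_i‖₂ + λ₁ Σ_{r=1}^n ‖w^r‖₂ + λ₂ Σ_{i=1}^l Σ_{j=1}^k ‖w_i^j‖₂. -/
import Mathlib


/-- The Euclidean (ℓ₂) norm of a vector in `ℝ^d`. -/
noncomputable def e2norm {d : ℕ} (v : Fin d → ℝ) : ℝ :=
  Real.sqrt (∑ j, v j ^ 2)

/-- The Euclidean (ℓ₂) norm of the subvector of `v : ℝ^n` indexed by the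
set `B` of coordinates. -/
noncomputable def blk2norm {n : ℕ} (B : Finset (Fin n)) (v : Fin n → ℝ) : ℝ :=
  Real.sqrt (∑ r ∈ B, v r ^ 2)


lemma e2norm_pos {d : ℕ} {v : Fin d → ℝ} (hv : v ≠ 0) : 0 < e2norm v := by
  unfold e2norm; apply Real.sqrt_pos.mpr
  obtain ⟨j, hj⟩ := Function.ne_iff.mp hv
  exact Finset.sum_pos' (fun i _ => sq_nonneg _) ⟨j, Finset.mem_univ j, sq_pos_iff.mpr hj⟩

lemma blk2norm_pos {n : ℕ} {B : Finset (Fin n)} {v : Fin n → ℝ}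
    (h : ∃ r ∈ B, v r ≠ 0) : 0 < blk2norm B v := by
  unfold blk2norm; apply Real.sqrt_pos.mpr
  obtain ⟨r, hr, hv⟩ := h
  exact Finset.sum_pos' (fun i _ => sq_nonneg _) ⟨r, hr, sq_pos_iff.mpr hv⟩

lemma key_ineq (a t : ℝ) (ha : 0 < a) : t ≤ t ^ 2 / (2 * a) + a / 2 := by
  rw [div_add_div _ _ (by positivity) two_ne_zero, le_div_iff₀ (by positivity)]
  nlinarith [sq_nonneg (t - a)]

lemma key_eq (a : ℝ) (ha : 0 < a) : a ^ 2 / (2 * a) = a / 2 := by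
  field_simp

/-- Theorem 1 of the paper (key step): if the update `W̃` satisfies the
surrogate (reweighted quadratic) inequality, then the objective value of
Eq. (7), `f(W) = Σ_i ‖X w_i − y_i‖₂ + λ₁‖W‖_{2,1} + λ₂‖W‖_{S₁}`, does not
increase. -/
theorem theorem1_key_step
    {m n l k : ℕ} (X : Matrix (Fin m) (Fin n) ℝ)
    (y : Fin l → Fin m → ℝ) (lam1 lam2 : ℝ)
    (hlam1 : 0 ≤ lam1) (hlam2 : 0 ≤ lam2)
    (B : Fin k → Finset (Fin n))
    (hdisj : ∀ j j', j ≠ j' → Disjoint (B j) (B j'))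
    (hcover : ∀ r : Fin n, ∃ j, r ∈ B j)
    (W Wtil : Matrix (Fin n) (Fin l) ℝ)
    (hres : ∀ i, X.mulVec (fun r => W r i) ≠ y i)
    (hrow : ∀ r, W r ≠ 0)
    (hblk : ∀ (i : Fin l) (j : Fin k), ∃ r ∈ B j, W r i ≠ 0)
    (hsurrogate :
      (∑ i, e2norm (X.mulVec (fun r => Wtil r i) - y i) ^ 2
          / (2 * e2norm (X.mulVec (fun r => W r i) - y i)))
        + lam1 * ∑ r, e2norm (Wtil r) ^ 2 / (2 * e2norm (W r))
        + lam2 * ∑ i : Fin l, ∑ j : Fin k,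
            blk2norm (B j) (fun r => Wtil r i) ^ 2
              / (2 * blk2norm (B j) (fun r => W r i))
      ≤ (∑ i, e2norm (X.mulVec (fun r => W r i) - y i) ^ 2
          / (2 * e2norm (X.mulVec (fun r => W r i) - y i)))
        + lam1 * ∑ r, e2norm (W r) ^ 2 / (2 * e2norm (W r))
        + lam2 * ∑ i : Fin l, ∑ j : Fin k,
            blk2norm (B j) (fun r => W r i) ^ 2
              / (2 * blk2norm (B j) (fun r => W r i))) :
    (∑ i, e2norm (X.mulVec (fun r => Wtil r i) - y i))
      + lam1 * ∑ r, e2norm (Wtil r)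
      + lam2 * ∑ i : Fin l, ∑ j : Fin k, blk2norm (B j) (fun r => Wtil r i)
    ≤ (∑ i, e2norm (X.mulVec (fun r => W r i) - y i))
      + lam1 * ∑ r, e2norm (W r)
      + lam2 * ∑ i : Fin l, ∑ j : Fin k, blk2norm (B j) (fun r => W r i) := by
  have hapos : ∀ i, 0 < e2norm (X.mulVec (fun r => W r i) - y i) :=
    fun i => e2norm_pos (sub_ne_zero.mpr (hres i))
  have hbpos : ∀ r, 0 < e2norm (W r) := fun r => e2norm_pos (hrow r)
  have hcpos : ∀ i j, 0 < blk2norm (B j) (fun r => W r i) :=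
    fun i j => blk2norm_pos (hblk i j)
  -- rewrite the RHS of the surrogate inequality
  rw [Finset.sum_congr rfl (fun i _ => key_eq _ (hapos i)),
      Finset.sum_congr rfl (fun r _ => key_eq _ (hbpos r)),
      Finset.sum_congr rfl (fun i _ => Finset.sum_congr rfl
        (fun j _ => key_eq _ (hcpos i j)))] at hsurrogate
  have S1 : (∑ i, e2norm (X.mulVec (fun r => Wtil r i) - y i))
      ≤ (∑ i, e2norm (X.mulVec (fun r => Wtil r i) - y i) ^ 2
          / (2 * e2norm (X.mulVec (fun r => W r i) - y i)))
        + ∑ i, e2norm (X.mulVec (fun r => W r i) - y i) / 2 := by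
    rw [← Finset.sum_add_distrib]
    exact Finset.sum_le_sum fun i _ => key_ineq _ _ (hapos i)
  have S2 : (∑ r, e2norm (Wtil r))
      ≤ (∑ r, e2norm (Wtil r) ^ 2 / (2 * e2norm (W r)))
        + ∑ r, e2norm (W r) / 2 := by
    rw [← Finset.sum_add_distrib]
    exact Finset.sum_le_sum fun r _ => key_ineq _ _ (hbpos r)
  have S3 : (∑ i : Fin l, ∑ j : Fin k, blk2norm (B j) (fun r => Wtil r i))
      ≤ (∑ i : Fin l, ∑ j : Fin k,
            blk2norm (B j) (fun r => Wtil r i) ^ 2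
              / (2 * blk2norm (B j) (fun r => W r i)))
        + ∑ i : Fin l, ∑ j : Fin k, blk2norm (B j) (fun r => W r i) / 2 := by
    rw [← Finset.sum_add_distrib]
    refine Finset.sum_le_sum fun i _ => ?_
    rw [← Finset.sum_add_distrib]
    exact Finset.sum_le_sum fun j _ => key_ineq _ _ (hcpos i j)
  have S2' := mul_le_mul_of_nonneg_left S2 hlam1
  have S3' := mul_le_mul_of_nonneg_left S3 hlam2
  have Ea : (∑ i, e2norm (X.mulVec (fun r => W r i) - y i) / 2)
      = (∑ i, e2norm (X.mulVec (fun r => W r i) - y i)) / 2 := by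
    rw [Finset.sum_div]
  have Eb : (∑ r, e2norm (W r) / 2) = (∑ r, e2norm (W r)) / 2 := by
    rw [Finset.sum_div]
  have Ec : (∑ i : Fin l, ∑ j : Fin k, blk2norm (B j) (fun r => W r i) / 2)
      = (∑ i : Fin l, ∑ j : Fin k, blk2norm (B j) (fun r => W r i)) / 2 := by
    rw [Finset.sum_div]
    exact Finset.sum_congr rfl fun i _ => by rw [Finset.sum_div]
  rw [Ea] at S1
  rw [Eb] at S2'
  rw [Ec] at S3'
  rw [Ea, Eb, Ec] at hsurrogate
  nlinarith [S1, S2', S3', hsurrogate]
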